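/- Let F : ℝⁿ → ℝⁿ be a polynomial map with F(0) = 0 and j(F)(0) ≠ 0, and let G be its Segre extension. Then the complement of the image of G is exactly the set {((1/t) • a, t) : a ∉ F(ℝⁿ), t ≠ 0}; equivalently, a point (y,t) ∈ ℝⁿ × ℝ lies in the image of G if and only if t = 0 or t • y lies in the image of F. -/
import Mathlib


noncomputable section

/-- A map between real coordinate spaces is a polynomial map if each component is
given by evaluation of a real polynomial. -/
def IsPolynomialMap {ι κ : Type*} (F : (ι → ℝ) → (κ → ℝ)) : Prop :=
  ∃ p : κ → MvPolynomial ι ℝ, ∀ x i, F x i = MvPolynomial.eval x (p i)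

/-- The Jacobian determinant j(F)(p) = det J(F)(p) of a map at a point. -/
def jdet {E : Type*} [NormedAddCommGroup E] [NormedSpace ℝ E] (F : E → E) (p : E) : ℝ :=
  LinearMap.det (fderiv ℝ F p : E →ₗ[ℝ] E)

lemma IsPolynomialMap.continuous {ι κ : Type*} [Fintype ι] {F : (ι → ℝ) → (κ → ℝ)}
    (hF : IsPolynomialMap F) : Continuous F := by
  obtain ⟨p, hp⟩ := hF
  have : F = fun x i => MvPolynomial.eval x (p i) := by funext x i; exact hp x i
  rw [this]
  exact continuous_pi fun i => MvPolynomial.continuous_eval (p i)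

lemma IsPolynomialMap.differentiable {ι κ : Type*} [Fintype ι] [Fintype κ] {F : (ι → ℝ) → (κ → ℝ)}
    (hF : IsPolynomialMap F) : Differentiable ℝ F := by
  obtain ⟨p, hp⟩ := hF
  have : F = fun x i => MvPolynomial.eval x (p i) := by funext x i; exact hp x i
  rw [this]
  intro x
  exact differentiableAt_pi.2 fun i =>
    ((AnalyticOnNhd.eval_mvPolynomial (p i)) x trivial).differentiableAt

/-- let F : ℝⁿ → ℝⁿ be a polynomial map with F(0) = 0 and j(F)(0) ≠ 0,
and let G be its Segre extension. The complement of the image of G is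
{((1/t) • a, t) : a ∉ F(ℝⁿ), t ≠ 0}; equivalently, (y,t) is in the image of G iff
t = 0 or t • y is in the image of F.
(ℝⁿ × ℝ is modelled as Fin (n+1) → ℝ via Fin.snoc.) -/
theorem stmt8 (n : ℕ) (F : (Fin n → ℝ) → (Fin n → ℝ))
    (hF : IsPolynomialMap F) (h0 : F 0 = 0) (hj0 : jdet F 0 ≠ 0)
    (G₁ : (Fin (n + 1) → ℝ) → (Fin n → ℝ)) (hG₁ : IsPolynomialMap G₁)
    (hG₁F : ∀ v : Fin (n + 1) → ℝ,
      v (Fin.last n) • G₁ v = F (v (Fin.last n) • (v ∘ Fin.castSucc)))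
    (G : (Fin (n + 1) → ℝ) → (Fin (n + 1) → ℝ))
    (hG : ∀ v, G v = Fin.snoc (G₁ v) (v (Fin.last n))) :
    (Set.range G)ᶜ =
      {w : Fin (n + 1) → ℝ | ∃ (a : Fin n → ℝ) (t : ℝ),
        a ∉ Set.range F ∧ t ≠ 0 ∧ w = Fin.snoc (t⁻¹ • a) t} ∧
    ∀ (y : Fin n → ℝ) (t : ℝ),
      Fin.snoc y t ∈ Set.range G ↔ t = 0 ∨ t • y ∈ Set.range F := by
  -- the linear map L = fderiv F 0
  set L : (Fin n → ℝ) →ₗ[ℝ] (Fin n → ℝ) := (fderiv ℝ F 0 : (Fin n → ℝ) →ₗ[ℝ] (Fin n → ℝ))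
    with hL
  have hLdet : LinearMap.det L ≠ 0 := hj0
  -- G₁ at t = 0 equals L
  have hkey : ∀ x : Fin n → ℝ, G₁ (Fin.snoc x 0) = L x := by
    intro x
    -- continuity of g t = G₁ (snoc x t) at 0
    have hcs : Continuous fun t : ℝ => (Fin.snoc x t : Fin (n + 1) → ℝ) := by
      apply continuous_pi
      intro j
      refine Fin.lastCases ?_ ?_ j
      · simp only [Fin.snoc_last]; exact continuous_id
      · intro i; simp only [Fin.snoc_castSucc]; exact continuous_const
    have hc : ContinuousAt (fun t : ℝ => G₁ (Fin.snoc x t)) 0 :=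
      (hG₁.continuous.comp hcs).continuousAt
    -- derivative of t ↦ F (t • x) at 0 is L x
    have h1 : HasDerivAt (fun t : ℝ => t • x) x 0 := by
      simpa using (hasDerivAt_id (0 : ℝ)).smul_const x
    have hFd : HasFDerivAt F (fderiv ℝ F 0) ((fun t : ℝ => t • x) 0) := by
      simpa using (hF.differentiable 0).hasFDerivAt
    have hd : HasDerivAt (fun t : ℝ => F (t • x)) (L x) 0 := hFd.comp_hasDerivAt 0 h1
    have hslope := hasDerivAt_iff_tendsto_slope.1 hd
    -- slope equals g on 𝓝[≠] 0
    have heq : ∀ t : ℝ, t ≠ 0 → slope (fun t : ℝ => F (t • x)) 0 t = G₁ (Fin.snoc x t) := by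
      intro t ht
      have hv := hG₁F (Fin.snoc x t)
      have hvl : (Fin.snoc x t : Fin (n + 1) → ℝ) (Fin.last n) = t := Fin.snoc_last _ _
      have hvc : (Fin.snoc x t : Fin (n + 1) → ℝ) ∘ Fin.castSucc = x := by
        funext i; exact Fin.snoc_castSucc _ _ _
      rw [hvl, hvc] at hv
      rw [slope_def_module]
      simp only [zero_smul, h0, sub_zero]
      rw [← hv, smul_smul, inv_mul_cancel₀ ht, one_smul]
    have hslope' : Filter.Tendsto (fun t : ℝ => G₁ (Fin.snoc x t)) (nhdsWithin 0 {(0:ℝ)}ᶜ)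
        (nhds (L x)) := by
      refine hslope.congr' ?_
      filter_upwards [self_mem_nhdsWithin] with t ht
      exact heq t ht
    have hg0 : Filter.Tendsto (fun t : ℝ => G₁ (Fin.snoc x t)) (nhdsWithin 0 {(0:ℝ)}ᶜ)
        (nhds (G₁ (Fin.snoc x 0))) := hc.continuousWithinAt.tendsto
    exact tendsto_nhds_unique hg0 hslope'
  -- surjectivity of x ↦ G₁ (snoc x 0)
  have hsurj : ∀ y : Fin n → ℝ, ∃ x, G₁ (Fin.snoc x 0) = y := by
    intro y
    obtain ⟨x, hx⟩ := (L.equivOfDetNeZero hLdet).surjective y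
    exact ⟨x, by rw [hkey]; exact hx⟩
  -- the main equivalence
  have main : ∀ (y : Fin n → ℝ) (t : ℝ),
      Fin.snoc y t ∈ Set.range G ↔ t = 0 ∨ t • y ∈ Set.range F := by
    intro y t
    constructor
    · rintro ⟨v, hv⟩
      rw [hG v] at hv
      have hlast : v (Fin.last n) = t := by
        have := congrFun hv (Fin.last n); simpa using this
      have hy : G₁ v = y := by
        funext i
        have := congrFun hv (Fin.castSucc i); simpa using this
      rcases eq_or_ne t 0 with h | h
      · exact Or.inl h
      · right
        refine ⟨v (Fin.last n) • (v ∘ Fin.castSucc), ?_⟩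
        rw [← hG₁F v, hlast, hy]
    · intro h
      rcases eq_or_ne t 0 with rfl | ht
      · obtain ⟨x, hx⟩ := hsurj y
        refine ⟨Fin.snoc x 0, ?_⟩
        rw [hG, hx, Fin.snoc_last]
      · rcases h with h | ⟨a, ha⟩
        · exact absurd h ht
        refine ⟨Fin.snoc (t⁻¹ • a) t, ?_⟩
        rw [hG]
        have hvl : (Fin.snoc (t⁻¹ • a) t : Fin (n + 1) → ℝ) (Fin.last n) = t :=
          Fin.snoc_last _ _
        have hvc : (Fin.snoc (t⁻¹ • a) t : Fin (n + 1) → ℝ) ∘ Fin.castSucc = t⁻¹ • a := by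
          funext i; exact Fin.snoc_castSucc _ _ _
        have hv := hG₁F (Fin.snoc (t⁻¹ • a) t)
        rw [hvl, hvc, smul_inv_smul₀ ht, ha] at hv
        have hy : G₁ (Fin.snoc (t⁻¹ • a) t) = y := smul_right_injective _ ht hv
        rw [hy, hvl]
    -- done
  refine ⟨?_, main⟩
  ext w
  simp only [Set.mem_compl_iff, Set.mem_setOf_eq]
  have hw : Fin.snoc (Fin.init w) (w (Fin.last n)) = w := Fin.snoc_init_self w
  have hmw := main (Fin.init w) (w (Fin.last n))
  rw [hw] at hmw
  constructor
  · intro hnot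
    rw [hmw] at hnot
    push_neg at hnot
    obtain ⟨ht, hmem⟩ := hnot
    refine ⟨w (Fin.last n) • Fin.init w, w (Fin.last n), hmem, ht, ?_⟩
    rw [inv_smul_smul₀ ht, hw]
  · rintro ⟨a, t, ha, ht, rfl⟩ hmem
    rw [main] at hmem
    rcases hmem with h | h
    · exact ht h
    · rw [smul_inv_smul₀ ht] at h
      exact ha h
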